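/- arXiv:1006.3447 — 4 statements merged into one kernel-verified Lean document; each statement's English description precedes it below -/
import Mathlib

section
/- Every switching class of odd order 2n−1 contains a matrix X_E such that each row of X_E has an even number of entries equal to 1. (Existence of an Eulerian representative.) -/
open Matrix Finset

/-- A symmetric matrix with zero diagonal and off-diagonal entries in `{±1}`. -/
def IsLinkingMatrix {n : ℕ} (X : Matrix (Fin n) (Fin n) ℤ) : Prop :=
  X.IsSymm ∧ (∀ i, X i i = 0) ∧ ∀ i j, i ≠ j → X i j = 1 ∨ X i j = -1

/-- Each row contains an even number of entries equal to `+1`. -/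
def IsEulerian {n : ℕ} (X : Matrix (Fin n) (Fin n) ℤ) : Prop :=
  ∀ i, Even ((Finset.univ.filter fun j : Fin n => j ≠ i ∧ X i j = 1).card)

/-!
Let `G` be the graph of the `+1` entries of `X` and switch with the signs `d i = (-1) ^ deg i`.
For `j ≠ i` the switched entry `d i * d j * X i j` is `+1` exactly when
`[X i j = 1] + deg i + deg j` is odd, so modulo 2 the number of `+1`'s in row `i` becomes
`deg i + (m - 1) * deg i + (∑ j, deg j - deg i) = (m - 1) * deg i + ∑ j, deg j`.
This vanishes because `m` is odd and, by the handshake lemma, `∑ j, deg j` is even.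
No permutation is needed.
-/

lemma ite_neg_one_pow_mul_eq_one {x : ℤ} (hx : x = 1 ∨ x = -1) (k : ℕ) :
    (if (-1) ^ k * x = 1 then 1 else 0 : ZMod 2) = (if x = 1 then 1 else 0) + k := by
  rcases Nat.even_or_odd k with hk | hk
  · rw [hk.neg_one_pow, one_mul, ZMod.natCast_eq_zero_iff_even.2 hk, add_zero]
  · rw [hk.neg_one_pow, ZMod.natCast_eq_one_iff_odd.2 hk]
    rcases hx with rfl | rfl <;> decide

lemma natCast_card_filter_ne_and {ι R : Type*} [Fintype ι] [DecidableEq ι]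
    [AddCommMonoidWithOne R] (i : ι) (p : ι → Prop) [DecidablePred p] :
    (#{j | j ≠ i ∧ p j} : R) = ∑ j ∈ univ.erase i, if p j then 1 else 0 := by
  rw [← natCast_card_filter, filter_erase]
  congr 2
  ext j
  simp

def plusGraph {ι : Type*} (X : Matrix ι ι ℤ) (hX : X.IsSymm) : SimpleGraph ι where
  Adj i j := i ≠ j ∧ X i j = 1
  symm := ⟨fun i j h => ⟨h.1.symm, (hX.apply i j).trans h.2⟩⟩
  loopless := ⟨fun _ h => h.1 rfl⟩

section PlusGraph

variable {ι : Type*} [Fintype ι] [DecidableEq ι] (X : Matrix ι ι ℤ) (hX : X.IsSymm)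

instance : DecidableRel (plusGraph X hX).Adj :=
  fun i j => inferInstanceAs (Decidable (i ≠ j ∧ X i j = 1))

lemma degree_plusGraph (i : ι) : (plusGraph X hX).degree i = #{j | j ≠ i ∧ X i j = 1} := by
  rw [← SimpleGraph.card_neighborFinset_eq_degree]
  congr 1
  ext j
  rw [SimpleGraph.mem_neighborFinset, mem_filter]
  simp [plusGraph, ne_comm]

lemma sum_degree_plusGraph_cast_eq_zero : ∑ i, ((plusGraph X hX).degree i : ZMod 2) = 0 := by
  rw [← Nat.cast_sum, SimpleGraph.sum_degrees_eq_twice_card_edges,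
    ZMod.natCast_eq_zero_iff_even]
  exact even_two_mul _

end PlusGraph

theorem isEulerian_switch_neg_one_pow_degree {m : ℕ} (hm : Odd m)
    {X : Matrix (Fin m) (Fin m) ℤ} (hX : X.IsSymm)
    (hpm : ∀ i j, i ≠ j → X i j = 1 ∨ X i j = -1) :
    IsEulerian (of fun i j => (-1) ^ (plusGraph X hX).degree i *
      (-1) ^ (plusGraph X hX).degree j * X i j) := by
  set deg : Fin m → ZMod 2 := fun i => (plusGraph X hX).degree i
  have hsum : ∑ j, deg j = 0 := sum_degree_plusGraph_cast_eq_zero X hX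
  have hm' : ((m - 1 : ℕ) : ZMod 2) = 0 :=
    ZMod.natCast_eq_zero_iff_even.2 (Nat.Odd.sub_odd hm odd_one)
  intro i
  rw [← ZMod.natCast_eq_zero_iff_even, natCast_card_filter_ne_and]
  calc ∑ j ∈ univ.erase i, (if (-1) ^ (plusGraph X hX).degree i *
          (-1) ^ (plusGraph X hX).degree j * X i j = 1 then 1 else 0 : ZMod 2)
      = ∑ j ∈ univ.erase i, ((if X i j = 1 then 1 else 0 : ZMod 2) + (deg i + deg j)) :=
        sum_congr rfl fun j hj => by
          rw [← pow_add, ite_neg_one_pow_mul_eq_one (hpm i j (ne_of_mem_erase hj).symm),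
            Nat.cast_add]
    _ = deg i + (m - 1 : ℕ) * deg i + (∑ j, deg j - deg i) := by
        rw [sum_add_distrib, sum_add_distrib, ← natCast_card_filter_ne_and,
          ← degree_plusGraph X hX, sum_const, card_erase_of_mem (mem_univ i), card_univ, Fintype.card_fin, nsmul_eq_mul,
          sum_erase_eq_sub (mem_univ i), ← add_assoc]
    _ = 0 := by
        rw [hsum, hm']
        ring

/-- Every switching class of odd order `2n - 1` contains an Eulerian matrix: there are
a permutation `σ` and signs `d` so that the switched matrix
`(i, j) ↦ d i * d j * X (σ i) (σ j)` has an even number of `+1` entries in each row. -/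
theorem exists_eulerian_representative (n : ℕ) (hn : 0 < n)
    (X : Matrix (Fin (2 * n - 1)) (Fin (2 * n - 1)) ℤ) (hX : IsLinkingMatrix X) :
    ∃ (σ : Equiv.Perm (Fin (2 * n - 1))) (d : Fin (2 * n - 1) → ℤ),
      (∀ i, d i = 1 ∨ d i = -1) ∧
      IsEulerian (Matrix.of fun i j => d i * d j * X (σ i) (σ j)) :=
  ⟨1, fun i => (-1) ^ (plusGraph X hX.1).degree i, fun i => neg_one_pow_eq_or ℤ _,
    isEulerian_switch_neg_one_pow_degree ⟨n - 1, by omega⟩ hX.1 hX.2.2⟩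
end

section
/- Uniqueness of the Eulerian representative in odd order: if X and DXD are both Eulerian, where X is a symmetric matrix of odd order 2n−1 with zero diagonal and ±1 off-diagonal entries, and D is a diagonal matrix with diagonal entries ε_i ∈ {±1}, then D = ±Identity. -/
open Matrix Finset

/-!
Conjugating by `D` flips the sign of `X i j` exactly when `d i ≠ d j`, so in row `i` the `+1`
entries of `X` and of `D X D` differ precisely on `{j | d i ≠ d j}`; both being even, so is this
set. If `d` took both signs, the sets `{j | d j = -1}` and `{j | d j = 1}` would both be even,
and so would be `m`, their total.
-/

open scoped symmDiff

theorem Finset.even_card_symmDiff {α : Type*} [DecidableEq α] {s t : Finset α}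
    (hs : Even #s) (ht : Even #t) : Even #(s ∆ t) := by
  have hinter : #(s ∩ t) ≤ #(s ∪ t) := card_le_card inter_subset_union
  rw [symmDiff_eq_sup_sdiff_inf, sup_eq_union, inf_eq_inter,
    card_sdiff_of_subset inter_subset_union, Nat.even_sub hinter, ← Nat.even_add,
    card_union_add_card_inter]
  exact hs.add ht

theorem mul_mul_eq_one_iff {a b x : ℤ} (ha : a = 1 ∨ a = -1) (hb : b = 1 ∨ b = -1)
    (hx : x = 1 ∨ x = -1) : a * b * x = 1 ↔ (x = 1 ↔ a = b) := by
  rcases ha with rfl | rfl <;> rcases hb with rfl | rfl <;> rcases hx with rfl | rfl <;> norm_num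

theorem IsEulerian.even_card_sign_ne {n : ℕ} {X : Matrix (Fin n) (Fin n) ℤ}
    (hX : ∀ i j, i ≠ j → X i j = 1 ∨ X i j = -1) {d : Fin n → ℤ} (hd : ∀ i, d i = 1 ∨ d i = -1)
    (hXE : IsEulerian X) (hYE : IsEulerian (Matrix.of fun i j => d i * d j * X i j)) (i : Fin n) :
    Even #{j | d i ≠ d j} := by
  have hY : Even #{j | j ≠ i ∧ d i * d j * X i j = 1} := hYE i
  convert even_card_symmDiff (hXE i) hY using 2
  ext j
  by_cases hji : j = i
  · simp [mem_symmDiff, hji]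
  · simp [mem_symmDiff, hji, mul_mul_eq_one_iff (hd i) (hd j) (hX i j (Ne.symm hji))]
    tauto

theorem Function.eq_of_even_card_ne {ι β : Type*} [Fintype ι] [DecidableEq β]
    (hι : Odd (Fintype.card ι)) (d : ι → β) (h : ∀ i, Even #{j | d i ≠ d j}) {a b : ι}
    (hab : ∀ j, d j = d a ∨ d j = d b) : d a = d b := by
  by_contra hne
  have hcompl : #{j | ¬d a ≠ d j} = #{j | d b ≠ d j} := by
    congr 1
    ext j
    rcases hab j with hj | hj <;> simp [hj, hne, Ne.symm hne]
  have := card_filter_add_card_filter_not (s := univ) (fun j => d a ≠ d j)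
  rw [hcompl, card_univ] at this
  exact Nat.not_even_iff_odd.mpr hι (this ▸ (h a).add (h b))

/-- Uniqueness of the Eulerian representative in odd order: if `X` and `D X D`
(entrywise `(i,j) ↦ d i * d j * X i j`) are both Eulerian, with `X` of odd order and
`d` a `±1` vector, then `d = ±(1,…,1)`, i.e. `D = ± Id`. -/
theorem eulerian_representative_unique {m : ℕ} (hm : Odd m)
    (X : Matrix (Fin m) (Fin m) ℤ) (hX : IsLinkingMatrix X)
    (d : Fin m → ℤ) (hd : ∀ i, d i = 1 ∨ d i = -1)
    (hXE : IsEulerian X)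
    (hYE : IsEulerian (Matrix.of fun i j => d i * d j * X i j)) :
    (∀ i, d i = 1) ∨ (∀ i, d i = -1) := by
  by_contra! ⟨⟨i, hi⟩, ⟨k, hk⟩⟩
  have hi : d i = -1 := (hd i).resolve_left hi
  have hk : d k = 1 := (hd k).resolve_right hk
  have hik : d i = d k :=
    Function.eq_of_even_card_ne (by rwa [Fintype.card_fin]) d
      (IsEulerian.even_card_sign_ne hX.2.2 hd hXE hYE) fun j => by rw [hi, hk]; exact (hd j).symm
  rw [hi, hk] at hik
  norm_num at hik
end

section
/- Eulerian graphs of odd order 2n−1 are in bijection with switching classes of order 2n−1: the map sending an Eulerian matrix to its switching class is a bijection from the set of Eulerian matrices up to conjugation by permutation matrices onto the set of switching classes. -/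
/-!
Count degrees modulo 2. Switching by the signs `d`, with `s = signParity ∘ d`, changes the degree
parity of vertex `i` by `s i + ∑ j, s j` when the order is odd. Choosing `s` to be the degree
parities themselves, whose sum vanishes by the handshake lemma, makes every degree even. If
both a matrix and its switch are Eulerian, then `s i = ∑ j, s j` for all `i`, so `d` is
constant and switching by `d` does nothing.
-/

open Matrix Finset

/-- Switching equivalence, written entrywise: `Y = D Pᵀ X P D` for a permutation
matrix `P` (permutation `σ`) and a diagonal `±1` matrix `D` (diagonal `d`). -/
def SwitchingEquiv {n : ℕ} (X Y : Matrix (Fin n) (Fin n) ℤ) : Prop :=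
  ∃ (σ : Equiv.Perm (Fin n)) (d : Fin n → ℤ), (∀ i, d i = 1 ∨ d i = -1) ∧
    ∀ i j, Y i j = d i * d j * X (σ i) (σ j)

theorem Finset.sum_sum_eq_zero_of_symm {ι R : Type*} [Fintype ι] [Ring R] [CharP R 2]
    (f : ι → ι → R) (hsymm : ∀ i j, f i j = f j i) (hdiag : ∀ i, f i i = 0) :
    ∑ i, ∑ j, f i j = 0 := by
  rw [← Finset.sum_product']
  refine Finset.sum_involution (fun p _ => p.swap) (fun p _ => ?_) (fun p _ hp hswap => ?_)
    (fun p _ => Finset.mem_univ _) (fun p _ => rfl)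
  · rw [Prod.fst_swap, Prod.snd_swap, hsymm p.2 p.1, CharTwo.add_self_eq_zero]
  · obtain ⟨i, j⟩ := p
    obtain rfl : j = i := (Prod.ext_iff.mp hswap).1
    exact hp (hdiag j)

/-- Identifies `{1, -1}` with `ZMod 2`. -/
def signParity (a : ℤ) : ZMod 2 := if a = 1 then 0 else 1

lemma signParity_mul {a b : ℤ} (ha : a = 1 ∨ a = -1) (hb : b = 1 ∨ b = -1) :
    signParity (a * b) = signParity a + signParity b := by
  rcases ha with rfl | rfl <;> rcases hb with rfl | rfl <;> decide

lemma eq_of_signParity_eq {a b : ℤ} (ha : a = 1 ∨ a = -1) (hb : b = 1 ∨ b = -1)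
    (h : signParity a = signParity b) : a = b := by
  rcases ha with rfl | rfl <;> rcases hb with rfl | rfl <;> simp_all [signParity]

section

variable {m : ℕ}

def edgeParity (X : Matrix (Fin m) (Fin m) ℤ) (i j : Fin m) : ZMod 2 :=
  if j ≠ i ∧ X i j = 1 then 1 else 0

def degreeParity (X : Matrix (Fin m) (Fin m) ℤ) (i : Fin m) : ZMod 2 :=
  ∑ j, edgeParity X i j

/-- Switching `X` by the diagonal sign matrix `D = diagonal d`: `D X D`. -/
def switching (d : Fin m → ℤ) (X : Matrix (Fin m) (Fin m) ℤ) : Matrix (Fin m) (Fin m) ℤ :=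
  of fun i j => d i * d j * X i j

@[simp]
lemma switching_apply (d : Fin m → ℤ) (X : Matrix (Fin m) (Fin m) ℤ) (i j : Fin m) :
    switching d X i j = d i * d j * X i j :=
  rfl

lemma isEulerian_iff_degreeParity_eq_zero (X : Matrix (Fin m) (Fin m) ℤ) :
    IsEulerian X ↔ ∀ i, degreeParity X i = 0 := by
  refine forall_congr' fun i => ?_
  rw [← ZMod.natCast_eq_zero_iff_even, natCast_card_filter]
  rfl

lemma sum_degreeParity_eq_zero {X : Matrix (Fin m) (Fin m) ℤ} (hX : X.IsSymm) :
    ∑ i, degreeParity X i = 0 := by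
  refine Finset.sum_sum_eq_zero_of_symm _ (fun i j => ?_) (fun i => by simp [edgeParity])
  simp only [edgeParity, hX.apply i j, ne_comm]

lemma degreeParity_submatrix (X : Matrix (Fin m) (Fin m) ℤ) (σ : Equiv.Perm (Fin m))
    (i : Fin m) : degreeParity (X.submatrix σ σ) i = degreeParity X (σ i) := by
  rw [degreeParity, degreeParity, ← Equiv.sum_comp σ (edgeParity X (σ i))]
  simp only [edgeParity, submatrix_apply, ne_eq, σ.apply_eq_iff_eq]
  rfl

lemma IsEulerian.submatrix {X : Matrix (Fin m) (Fin m) ℤ} (hX : IsEulerian X)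
    (σ : Equiv.Perm (Fin m)) : IsEulerian (X.submatrix σ σ) := by
  rw [isEulerian_iff_degreeParity_eq_zero] at hX ⊢
  simp [degreeParity_submatrix, hX]

lemma IsLinkingMatrix.submatrix {X : Matrix (Fin m) (Fin m) ℤ} (hX : IsLinkingMatrix X)
    (σ : Equiv.Perm (Fin m)) : IsLinkingMatrix (X.submatrix σ σ) :=
  ⟨hX.1.submatrix σ, fun i => hX.2.1 (σ i), fun _ _ hij => hX.2.2 _ _ (σ.injective.ne hij)⟩

lemma IsLinkingMatrix.switching {X : Matrix (Fin m) (Fin m) ℤ} (hX : IsLinkingMatrix X)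
    {d : Fin m → ℤ} (hd : ∀ i, d i = 1 ∨ d i = -1) : IsLinkingMatrix (switching d X) := by
  refine ⟨?_, fun i => by simp [hX.2.1 i], fun i j hij => ?_⟩
  · ext i j
    simp only [transpose_apply, switching_apply, hX.1.apply i j, mul_comm (d i)]
  · rcases hd i with h1 | h1 <;> rcases hd j with h2 | h2 <;>
      rcases hX.2.2 i j hij with h3 | h3 <;> simp [h1, h2, h3]

/-- An off-diagonal `±1` entry `x` is an edge iff `signParity x = 0`, and switching adds
`signParity (d i) + signParity (d j)` to it. -/
lemma edgeParity_switching {X : Matrix (Fin m) (Fin m) ℤ} (hX : IsLinkingMatrix X)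
    {d : Fin m → ℤ} (hd : ∀ i, d i = 1 ∨ d i = -1) (i j : Fin m) :
    edgeParity (switching d X) i j = edgeParity X i j + (signParity (d i) + signParity (d j)) := by
  by_cases hij : j = i
  · subst hij
    simp [edgeParity, CharTwo.add_self_eq_zero]
  have hx := hX.2.2 i j (Ne.symm hij)
  have hdd : d i * d j = 1 ∨ d i * d j = -1 := by
    rcases hd i with h1 | h1 <;> rcases hd j with h2 | h2 <;> simp [h1, h2]
  have edge_eq : ∀ x : ℤ, x = 1 ∨ x = -1 →
      (if j ≠ i ∧ x = 1 then (1 : ZMod 2) else 0) = 1 + signParity x := by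
    rintro x (rfl | rfl) <;> simp [hij, signParity, CharTwo.add_self_eq_zero]
  rw [edgeParity, edgeParity, edge_eq _ ((hX.switching hd).2.2 i j (Ne.symm hij)), edge_eq _ hx,
    switching_apply, signParity_mul hdd hx, signParity_mul (hd i) (hd j)]
  ring

/-- Switching at `i` itself flips the `m - 1` entries of row `i`, an even number in odd order;
each other switched vertex flips one entry. -/
lemma degreeParity_switching (hm : Odd m) {X : Matrix (Fin m) (Fin m) ℤ}
    (hX : IsLinkingMatrix X) {d : Fin m → ℤ} (hd : ∀ i, d i = 1 ∨ d i = -1) (i : Fin m) :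
    degreeParity (switching d X) i =
      degreeParity X i + signParity (d i) + ∑ j, signParity (d j) := by
  have hm2 : (m : ZMod 2) = 1 := by simpa using (ZMod.natCast_eq_one_iff_odd).mpr hm
  simp only [degreeParity, edgeParity_switching hX hd, sum_add_distrib, sum_const, card_univ,
    Fintype.card_fin, nsmul_eq_mul, hm2, one_mul, add_assoc]

lemma exists_switching_isEulerian (hm : Odd m) {X : Matrix (Fin m) (Fin m) ℤ}
    (hX : IsLinkingMatrix X) :
    ∃ d : Fin m → ℤ, (∀ i, d i = 1 ∨ d i = -1) ∧ IsEulerian (switching d X) := by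
  set d : Fin m → ℤ := fun i => if degreeParity X i = 0 then 1 else -1
  have hd : ∀ i, d i = 1 ∨ d i = -1 := fun i => by
    by_cases h : degreeParity X i = 0 <;> simp [d, h]
  have signParity_sign : ∀ p : ZMod 2, signParity (if p = 0 then 1 else -1) = p := by decide
  have hsd : ∀ i, signParity (d i) = degreeParity X i := fun i => signParity_sign _
  refine ⟨d, hd, (isEulerian_iff_degreeParity_eq_zero _).mpr fun i => ?_⟩
  rw [degreeParity_switching hm hX hd, hsd, sum_congr rfl fun j _ => hsd j,
    sum_degreeParity_eq_zero hX.1, CharTwo.add_self_eq_zero, add_zero]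

lemma switching_eq_self_of_isEulerian (hm : Odd m) {X : Matrix (Fin m) (Fin m) ℤ}
    (hX : IsLinkingMatrix X) (hEX : IsEulerian X) {d : Fin m → ℤ}
    (hd : ∀ i, d i = 1 ∨ d i = -1) (hEY : IsEulerian (switching d X)) :
    switching d X = X := by
  rw [isEulerian_iff_degreeParity_eq_zero] at hEX hEY
  have hconst : ∀ i, signParity (d i) = ∑ j, signParity (d j) := fun i =>
    CharTwo.add_eq_zero.mp <| by
      simpa [hEX i, hEY i, add_assoc] using (degreeParity_switching hm hX hd i).symm
  ext i j
  have hij : d i = d j := eq_of_signParity_eq (hd i) (hd j) ((hconst i).trans (hconst j).symm)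
  rcases hd i with h | h <;> simp [← hij, h]

end

/-- In odd order `2n - 1`, Eulerian matrices up to conjugation by permutation matrices
are in bijection with switching classes: every switching class contains an Eulerian
matrix (surjectivity), and two switching-equivalent Eulerian matrices are conjugate by
a permutation matrix (injectivity). -/
theorem eulerian_bijection_switching_classes (n : ℕ) (hn : 0 < n) :
    (∀ X : Matrix (Fin (2 * n - 1)) (Fin (2 * n - 1)) ℤ, IsLinkingMatrix X →
      ∃ Y, IsLinkingMatrix Y ∧ IsEulerian Y ∧ SwitchingEquiv X Y) ∧
    (∀ X Y : Matrix (Fin (2 * n - 1)) (Fin (2 * n - 1)) ℤ,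
      IsLinkingMatrix X → IsLinkingMatrix Y → IsEulerian X → IsEulerian Y →
      SwitchingEquiv X Y →
      ∃ σ : Equiv.Perm (Fin (2 * n - 1)), ∀ i j, Y i j = X (σ i) (σ j)) := by
  have hm : Odd (2 * n - 1) := ⟨n - 1, by omega⟩
  refine ⟨fun X hX => ?_, fun X Y hX _ hEX hEY ⟨σ, d, hd, hXY⟩ => ⟨σ, fun i j => ?_⟩⟩
  · obtain ⟨d, hd, hE⟩ := exists_switching_isEulerian hm hX
    exact ⟨switching d X, hX.switching hd, hE, 1, d, hd, fun _ _ => rfl⟩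
  · obtain rfl : Y = switching d (X.submatrix σ σ) := Matrix.ext hXY
    rw [switching_eq_self_of_isEulerian hm (hX.submatrix σ) (hEX.submatrix σ) hd hEY]
    rfl
end

section
/- For every even size 2n ≥ 4 there exist Eulerian matrices of both signatures: changing the signs of the entries x_{i,j} for 1 ≤ i ≠ j ≤ 3 of an Eulerian matrix of size 2n ≥ 4 yields an Eulerian matrix with opposite signature. -/
open Matrix Finset

/-- The row sign `ε_i = (∏_{j ≠ i} x_{i,j}) · (∏_{s < t} x_{s,t})`. -/
def rowSign {m : ℕ} (X : Matrix (Fin m) (Fin m) ℤ) (i : Fin m) : ℤ :=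
  (∏ j ∈ Finset.univ.filter (fun j : Fin m => j ≠ i), X i j) *
    ∏ p ∈ Finset.univ.filter (fun p : Fin m × Fin m => p.1 < p.2), X p.1 p.2

/-!
Negating the off-diagonal entries of a principal `k × k` block changes `k - 1` factors of the
row product of each row through the block, none of the other rows, and `k.choose 2` factors of
the product over `s < t`. For `k = 3` this is `2 + 3` resp. `0 + 3` sign changes, an odd number
in every row, so every row sign is negated.
-/

lemma Finset.prod_ite_neg {ι M : Type*} [CommMonoid M] [HasDistribNeg M] (s : Finset ι)
    (p : ι → Prop) [DecidablePred p] (f : ι → M) :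
    ∏ x ∈ s, (if p x then -f x else f x) = (-1) ^ #{x ∈ s | p x} * ∏ x ∈ s, f x := by
  rw [prod_ite, prod_neg, mul_assoc, prod_filter_mul_prod_filter_not]

section NegBlock

variable {α R : Type*} [DecidableEq α] [Neg R] (p : α → Prop) [DecidablePred p]

def negBlock (X : Matrix α α R) : Matrix α α R :=
  of fun i j => if i ≠ j ∧ p i ∧ p j then -X i j else X i j

variable {p}

lemma negBlock_isSymm {X : Matrix α α R} (hX : X.IsSymm) : (negBlock p X).IsSymm := by
  ext i j
  simp only [negBlock, transpose_apply, of_apply, hX.apply i j, ne_comm (a := j)]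
  grind

@[simp]
lemma negBlock_apply_self (X : Matrix α α R) (i : α) : negBlock p X i i = X i i := by
  simp [negBlock]

end NegBlock

lemma negBlock_apply_eq_one_or_neg_one {α R : Type*} [DecidableEq α] [Ring R] {p : α → Prop}
    [DecidablePred p] {X : Matrix α α R} {i j : α}
    (h : X i j = 1 ∨ X i j = -1) : negBlock p X i j = 1 ∨ negBlock p X i j = -1 := by
  simp only [negBlock, of_apply]
  rcases h with h | h <;> split_ifs <;> simp [h]

lemma rowSign_negBlock {m : ℕ} (p : Fin m → Prop) [DecidablePred p]
    (X : Matrix (Fin m) (Fin m) ℤ) (i : Fin m) :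
    rowSign (negBlock p X) i =
      (-1) ^ ((if p i then #{j | p j} - 1 else 0) + (#{j | p j}).choose 2) * rowSign X i := by
  have hrow : #{j ∈ {j | j ≠ i} | i ≠ j ∧ p i ∧ p j} = if p i then #{j | p j} - 1 else 0 := by
    split_ifs with hi
    · rw [← card_erase_of_mem ((mem_filter_univ _).2 hi)]
      congr 1
      ext j
      simp [hi, ne_comm]
    · simp [hi]
  have hpairs : #{x ∈ {x : Fin m × Fin m | x.1 < x.2} | x.1 ≠ x.2 ∧ p x.1 ∧ p x.2} =
      (#{j | p j}).choose 2 := by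
    rw [← card_product_filter_lt]
    congr 1
    ext x
    simp only [mem_filter, mem_univ, true_and, mem_product]
    grind
  simp only [rowSign, negBlock, of_apply]
  rw [Finset.prod_ite_neg, Finset.prod_ite_neg, hrow, hpairs]
  ring

lemma rowSign_negBlock_of_card_eq_three {m : ℕ} {p : Fin m → Prop} [DecidablePred p]
    (hp : #{j | p j} = 3) (X : Matrix (Fin m) (Fin m) ℤ) (i : Fin m) :
    rowSign (negBlock p X) i = -rowSign X i := by
  rw [rowSign_negBlock, hp]
  split_ifs <;> norm_num

lemma negBlock_eulerian_of_card_eq_three {m : ℕ} {p : Fin m → Prop} [DecidablePred p]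
    (hp : #{j | p j} = 3) {X : Matrix (Fin m) (Fin m) ℤ} (hsym : X.IsSymm)
    (hdiag : ∀ i, X i i = 0) (hoff : ∀ i j, i ≠ j → X i j = 1 ∨ X i j = -1)
    (hE : ∀ i j, rowSign X i = rowSign X j) :
    ((negBlock p X).IsSymm ∧ (∀ i, negBlock p X i i = 0) ∧
        ∀ i j, i ≠ j → negBlock p X i j = 1 ∨ negBlock p X i j = -1) ∧
      (∀ i j, rowSign (negBlock p X) i = rowSign (negBlock p X) j) ∧
      ∀ i, rowSign (negBlock p X) i = -rowSign X i := by
  have hneg := rowSign_negBlock_of_card_eq_three hp X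
  refine ⟨⟨negBlock_isSymm hsym, fun i => by simp [hdiag], fun i j hij =>
    negBlock_apply_eq_one_or_neg_one (hoff i j hij)⟩, fun i j => ?_, hneg⟩
  rw [hneg, hneg, hE i j]

/-- For every even size `2n ≥ 4`, changing the signs of the entries `x_{i,j}` with
`1 ≤ i ≠ j ≤ 3` of an Eulerian matrix (all row signs equal) yields again an
Eulerian matrix, but with the opposite signature. -/
theorem eulerian_both_signatures {n : ℕ} (hn : 2 ≤ n)
    (X : Matrix (Fin (2 * n)) (Fin (2 * n)) ℤ)
    (hsym : X.IsSymm) (hdiag : ∀ i, X i i = 0)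
    (hoff : ∀ i j, i ≠ j → X i j = 1 ∨ X i j = -1)
    (hE : ∀ i j, rowSign X i = rowSign X j) :
    ∀ Y : Matrix (Fin (2 * n)) (Fin (2 * n)) ℤ,
      (Y = Matrix.of fun (i j : Fin (2 * n)) =>
        if i ≠ j ∧ (i : ℕ) < 3 ∧ (j : ℕ) < 3 then -X i j else X i j) →
      (Y.IsSymm ∧ (∀ i, Y i i = 0) ∧ ∀ i j, i ≠ j → Y i j = 1 ∨ Y i j = -1) ∧
      (∀ i j, rowSign Y i = rowSign Y j) ∧
      (∀ i, rowSign Y i = -rowSign X i) := by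
  rintro _ rfl
  have hcard : #{j : Fin (2 * n) | (j : ℕ) < 3} = 3 := by
    rw [Fin.card_filter_val_lt]
    omega
  exact negBlock_eulerian_of_card_eq_three hcard hsym hdiag hoff hE
end
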